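/- Let λ' ⊢ a, μ' ⊢ b strictly dominate λ ⊢ a, μ ⊢ b in the sense that (λ',μ') ⊳ (λ,μ) (i.e. λ' ⊵ λ, μ' ⊵ μ, and they are not both equal). Then the product of the permutation module with the signed column sum vanishes: (M^{λ'} ⊗_K M^{μ'}) · k_{t_{λ,μ}} = 0, where k_{t_{λ,μ}} = Σ_{σ ∈ C_{t_λ}, τ ∈ C_{t_μ}} sgn(σ)sgn(τ)(σ,τ). -/

import Mathlib

/-!
STATEMENT 12: Let `λ' ⊢ a, μ' ⊢ b` strictly dominate `λ ⊢ a, μ ⊢ b` (i.e. `λ' ⊵ λ`,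
`μ' ⊵ μ`, not both equal).  Then the product of the Young permutation module with the signed
column sum vanishes: `(M^{λ'} ⊗[K] M^{μ'}) · k_{t_{λ,μ}} = 0`, where
`k_{t_{λ,μ}} = Σ_{σ ∈ C_{t_λ}, τ ∈ C_{t_μ}} sgn(σ)sgn(τ)(σ,τ) ∈ K[S_a × S_b]`.
-/


open TensorProduct

set_option maxSynthPendingDepth 8
set_option synthInstance.maxHeartbeats 1000000
set_option maxHeartbeats 2000000

noncomputable section

/-- The outer tensor product of representations of `G` and `H`. -/
def outerRep {K G H V W : Type} [Field K] [Monoid G] [Monoid H]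
    [AddCommMonoid V] [Module K V] [AddCommMonoid W] [Module K W]
    (ρ : Representation K G V) (τ : Representation K H W) :
    Representation K (G × H) (V ⊗[K] W) :=
  Representation.tprod (ρ.comp (MonoidHom.fst G H)) (τ.comp (MonoidHom.snd G H))

/-- A partition of `a` (a Young diagram with `a` boxes), given by its antitone sequence of
row lengths. -/
structure Shape (a : ℕ) where
  part : ℕ → ℕ
  antitone : ∀ i j, i ≤ j → part j ≤ part i
  sum_eq : ∑ i ∈ Finset.range a, part i = a
  eventually_zero : ∀ i, a ≤ i → part i = 0

/-- The dominance order on partitions of `a`. -/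
def Dominates {a : ℕ} (lam mu : Shape a) : Prop :=
  ∀ n, ∑ i ∈ Finset.range n, mu.part i ≤ ∑ i ∈ Finset.range n, lam.part i

/-- The cells `(i, j)` (row `i`, column `j`) of the Young diagram of shape `lam`. -/
abbrev Shape.cells {a : ℕ} (lam : Shape a) : Type := {p : ℕ × ℕ // p.2 < lam.part p.1}

/-- A `λ`-tableau: a bijective filling of the Young diagram of shape `λ` by `{1, …, a}`. -/
abbrev Shape.Tableau {a : ℕ} (lam : Shape a) : Type := Fin a ≃ lam.cells

/-- The row in which an entry lies. -/
def rowFn {a : ℕ} {lam : Shape a} (t : lam.Tableau) : Fin a → ℕ := fun x => (t x).1.1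

/-- The column in which an entry lies. -/
def colFn {a : ℕ} {lam : Shape a} (t : lam.Tableau) : Fin a → ℕ := fun x => (t x).1.2

/-- The action of `S_a` on functions `Fin a → ℕ` by permuting the domain. -/
instance permAction (a : ℕ) : MulAction (Equiv.Perm (Fin a)) (Fin a → ℕ) where
  smul σ f := f ∘ σ.symm
  one_smul _f := rfl
  mul_smul _σ _τ _f := rfl

variable (K : Type) [Field K]

/-- The permutation representation of `S_a` on the free `K`-module on all functions
`Fin a → ℕ`; the tabloids of shape `λ` (encoded by their row functions) span an invariant
subspace, the Young permutation module `M^λ`. -/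
def bigRep (a : ℕ) : Representation K (Equiv.Perm (Fin a)) ((Fin a → ℕ) →₀ K) :=
  { toFun := fun g => Finsupp.lmapDomain K K (g • ·)
    map_one' := by ext; simp
    map_mul' := fun x y => by ext; simp [mul_smul] }

/-- The tabloid `{t}` of a tableau `t`, as a basis vector of the big permutation module. -/
def tabloid {a : ℕ} {lam : Shape a} (t : lam.Tableau) : (Fin a → ℕ) →₀ K :=
  Finsupp.single (rowFn t) 1

open Classical in
/-- The polytabloid `e_t = Σ_{σ ∈ C_t} sgn(σ) {t·σ}` of a tableau `t`. -/
def polytabloid {a : ℕ} {lam : Shape a} (t : lam.Tableau) : (Fin a → ℕ) →₀ K :=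
  ∑ σ : Equiv.Perm (Fin a),
    if (∀ x, colFn t (σ x) = colFn t x) then
      ((Equiv.Perm.sign σ : ℤ) : K) • Finsupp.single (fun x => rowFn t (σ x)) 1
    else 0

/-- The Young permutation module `M^λ` of `K[S_a]`: the (invariant) span of the tabloids of
shape `λ`, as a module over the group algebra. -/
def permSubmodule {a : ℕ} (lam : Shape a) :
    Submodule (MonoidAlgebra K (Equiv.Perm (Fin a))) (bigRep K a).asModule :=
  Submodule.span _
    {v | ∃ t : lam.Tableau, v = ((bigRep K a).asModuleEquiv.symm (tabloid K t))}

/-- The Specht module `S^λ` of `K[S_a]`: the span of the polytabloids, as a module over the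
group algebra. -/
def spechtSubmodule {a : ℕ} (lam : Shape a) :
    Submodule (MonoidAlgebra K (Equiv.Perm (Fin a))) (bigRep K a).asModule :=
  Submodule.span _
    {v | ∃ t : lam.Tableau, v = ((bigRep K a).asModuleEquiv.symm (polytabloid K t))}

/-- The Specht module `S^λ`, as a representation of `S_a`. -/
def spechtRep {a : ℕ} (lam : Shape a) :
    Representation K (Equiv.Perm (Fin a))
      (RestrictScalars K (MonoidAlgebra K (Equiv.Perm (Fin a))) (spechtSubmodule K lam)) :=
  Representation.ofModule _

/-- The Young permutation module `M^λ`, as a representation of `S_a`. -/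
def permRep {a : ℕ} (lam : Shape a) :
    Representation K (Equiv.Perm (Fin a))
      (RestrictScalars K (MonoidAlgebra K (Equiv.Perm (Fin a))) (permSubmodule K lam)) :=
  Representation.ofModule _

/-- The outer tensor product `S^λ ⊗[K] S^μ` (`Specht module of `K[S_a × S_b]`), as a module
over `K[S_a × S_b]`. -/
abbrev outerSpechtModule {a b : ℕ} (lam : Shape a) (mu : Shape b) :=
  (outerRep (spechtRep K lam) (spechtRep K mu)).asModule

/-- The outer tensor product `M^λ ⊗[K] M^μ` (Young permutation module of `K[S_a × S_b]`),
as a module over `K[S_a × S_b]`. -/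
abbrev outerPermModule {a b : ℕ} (lam : Shape a) (mu : Shape b) :=
  (outerRep (permRep K lam) (permRep K mu)).asModule

/-- The outer tensor product `S_λ ⊗[K] S_μ` of dual Specht modules, as a module over
`K[S_a × S_b]`. -/
abbrev outerDualSpechtModule {a b : ℕ} (lam : Shape a) (mu : Shape b) :=
  (outerRep (spechtRep K lam).dual (spechtRep K mu).dual).asModule

open Classical in
/-- The signed column sum `k_{t_{λ,μ}} = Σ_{σ ∈ C_{t_λ}, τ ∈ C_{t_μ}} sgn(σ)sgn(τ)·(σ,τ)`
of a pair of tableaux, as an element of the group algebra `K[S_a × S_b]`. -/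
def colSum {a b : ℕ} {lam : Shape a} {mu : Shape b}
    (t : lam.Tableau) (t' : mu.Tableau) :
    MonoidAlgebra K (Equiv.Perm (Fin a) × Equiv.Perm (Fin b)) :=
  ∑ p : Equiv.Perm (Fin a) × Equiv.Perm (Fin b),
    if (∀ x, colFn t (p.1 x) = colFn t x) ∧ (∀ y, colFn t' (p.2 y) = colFn t' y) then
      (((Equiv.Perm.sign p.1 * Equiv.Perm.sign p.2 : ℤˣ) : ℤ) : K) • MonoidAlgebra.single p 1
    else 0
section Combinatorics

lemma Shape.part_le {a : ℕ} (lam : Shape a) (i : ℕ) : lam.part i ≤ a := by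
  rcases Nat.eq_zero_or_pos a with h | h
  · have := lam.eventually_zero i (by omega); omega
  · calc lam.part i ≤ lam.part 0 := lam.antitone 0 i (Nat.zero_le _)
      _ ≤ ∑ j ∈ Finset.range a, lam.part j :=
          Finset.single_le_sum (fun j _ => Nat.zero_le _) (Finset.mem_range.2 h)
      _ = a := lam.sum_eq

lemma dominates_antisymm {a : ℕ} {lam mu : Shape a}
    (h1 : Dominates lam mu) (h2 : Dominates mu lam) : lam = mu := by
  have hsum : ∀ n, ∑ i ∈ Finset.range n, lam.part i = ∑ i ∈ Finset.range n, mu.part i :=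
    fun n => le_antisymm (h2 n) (h1 n)
  have hp : ∀ i, lam.part i = mu.part i := by
    intro i
    have ha := hsum i
    have hb := hsum (i + 1)
    rw [Finset.sum_range_succ, Finset.sum_range_succ] at hb
    omega
  cases lam; cases mu
  simp only [Shape.mk.injEq]
  exact funext hp

lemma mem_of_lt_card {S : Finset ℕ} (hdc : ∀ i j, i ≤ j → j ∈ S → i ∈ S) {i : ℕ}
    (hi : i < S.card) : i ∈ S := by
  by_contra h
  have hsub : S ⊆ Finset.range i := by
    intro j hj
    rw [Finset.mem_range]
    by_contra hj'
    exact h (hdc i j (by omega) hj)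
  have := Finset.card_le_card hsub
  simp only [Finset.card_range] at this
  omega

lemma rowFn_lt {a : ℕ} {lam : Shape a} (t : lam.Tableau) (x : Fin a) : rowFn t x < a := by
  by_contra h
  have h0 := lam.eventually_zero (rowFn t x) (by omega)
  have h1 := (t x).2
  simp only [rowFn] at h0
  omega

lemma colFn_lt {a : ℕ} {lam : Shape a} (t : lam.Tableau) (x : Fin a) : colFn t x < a := by
  have h1 := (t x).2
  have h2 := Shape.part_le lam (rowFn t x)
  simp only [rowFn, colFn] at *
  omega

lemma card_row_fiber {a : ℕ} {lam : Shape a} (s : lam.Tableau) (i : ℕ) :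
    (Finset.univ.filter (fun x => rowFn s x = i)).card = lam.part i := by
  rw [← Finset.card_range (lam.part i)]
  apply Finset.card_bij (fun x _ => colFn s x)
  · intro x hx
    simp only [Finset.mem_filter, Finset.mem_univ, true_and] at hx
    rw [Finset.mem_range, ← hx]
    exact (s x).2
  · intro x hx y hy hxy
    simp only [Finset.mem_filter, Finset.mem_univ, true_and] at hx hy
    apply s.injective
    apply Subtype.ext
    apply Prod.ext
    · show rowFn s x = rowFn s y
      rw [hx, hy]
    · exact hxy
  · intro j hj
    rw [Finset.mem_range] at hj
    refine ⟨s.symm ⟨(i, j), hj⟩, ?_, ?_⟩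
    · rw [Finset.mem_filter]; exact ⟨Finset.mem_univ _, by simp [rowFn]⟩
    · simp [colFn]

lemma card_partition {a : ℕ} {p : Fin a → Prop} [DecidablePred p] (f : Fin a → ℕ) (M : ℕ)
    (hf : ∀ x, p x → f x < M) :
    (Finset.univ.filter p).card
      = ∑ c ∈ Finset.range M, (Finset.univ.filter (fun x => p x ∧ f x = c)).card := by
  rw [← Finset.card_biUnion]
  · congr 1
    ext x
    simp only [Finset.mem_biUnion, Finset.mem_range, Finset.mem_filter, Finset.mem_univ, true_and]
    constructor
    · intro hx; exact ⟨f x, hf x hx, hx, rfl⟩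
    · rintro ⟨c, _, hx, _⟩; exact hx
  · intro c1 _ c2 _ hne
    simp only [Finset.disjoint_left, Finset.mem_filter, Finset.mem_univ, true_and]
    rintro x ⟨_, h1⟩ ⟨_, h2⟩
    exact hne (by omega)

lemma card_row_lt {a : ℕ} {lam : Shape a} (s : lam.Tableau) (n : ℕ) :
    (Finset.univ.filter (fun x => rowFn s x < n)).card = ∑ i ∈ Finset.range n, lam.part i := by
  rw [card_partition (rowFn s) n (fun x hx => hx)]
  apply Finset.sum_congr rfl
  intro c hc
  rw [Finset.mem_range] at hc
  rw [← card_row_fiber s c]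
  congr 1
  ext x
  simp only [Finset.mem_filter, Finset.mem_univ, true_and]
  omega

lemma card_rowlt_col {a : ℕ} {lam : Shape a} (t : lam.Tableau) (n c : ℕ) :
    (Finset.univ.filter (fun x => rowFn t x < n ∧ colFn t x = c)).card
      = ((Finset.range n).filter (fun i => c < lam.part i)).card := by
  apply Finset.card_bij (fun x _ => rowFn t x)
  · intro x hx
    simp only [Finset.mem_filter, Finset.mem_univ, true_and] at hx
    simp only [Finset.mem_filter, Finset.mem_range]
    refine ⟨hx.1, ?_⟩
    rw [← hx.2]
    exact (t x).2
  · intro x hx y hy hxy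
    simp only [Finset.mem_filter, Finset.mem_univ, true_and] at hx hy
    apply t.injective
    apply Subtype.ext
    apply Prod.ext
    · exact hxy
    · show colFn t x = colFn t y
      rw [hx.2, hy.2]
  · intro i hi
    simp only [Finset.mem_filter, Finset.mem_range] at hi
    refine ⟨t.symm ⟨(i, c), hi.2⟩, ?_, ?_⟩
    · rw [Finset.mem_filter]
      exact ⟨Finset.mem_univ _, by simp only [rowFn, colFn, Equiv.apply_symm_apply]; exact ⟨hi.1, trivial⟩⟩
    · simp [rowFn]

lemma card_col {a : ℕ} {lam : Shape a} (t : lam.Tableau) (c : ℕ) :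
    (Finset.univ.filter (fun x => colFn t x = c)).card
      = ((Finset.range a).filter (fun i => c < lam.part i)).card := by
  rw [← card_rowlt_col t a c]
  congr 1
  ext x
  simp only [Finset.mem_filter, Finset.mem_univ, true_and]
  exact ⟨fun h => ⟨rowFn_lt t x, h⟩, fun h => h.2⟩

lemma card_bound {a : ℕ} {lam' lam : Shape a} (s : lam'.Tableau) (t : lam.Tableau)
    (hinj : ∀ x y, rowFn s x = rowFn s y → colFn t x = colFn t y → x = y) (n c : ℕ) :
    (Finset.univ.filter (fun x => rowFn s x < n ∧ colFn t x = c)).card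
      ≤ ((Finset.range n).filter (fun i => c < lam.part i)).card := by
  set m := (Finset.univ.filter (fun x => rowFn s x < n ∧ colFn t x = c)).card with hm
  have h1 : m ≤ n := by
    have hle : (Finset.univ.filter (fun x => rowFn s x < n ∧ colFn t x = c)).card
        ≤ (Finset.range n).card := by
      apply Finset.card_le_card_of_injOn (rowFn s)
      · intro x hx
        simp only [Finset.coe_filter, Finset.mem_univ, true_and, Set.mem_setOf_eq] at hx
        exact Finset.mem_range.2 hx.1
      · intro x hx y hy hxy
        simp only [Finset.coe_filter, Finset.mem_univ, true_and, Set.mem_setOf_eq] at hx hy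
        exact hinj x y hxy (hx.2.trans hy.2.symm)
    rw [Finset.card_range] at hle
    omega
  have h2 : m ≤ ((Finset.range a).filter (fun i => c < lam.part i)).card := by
    rw [hm, ← card_col t c]
    apply Finset.card_le_card
    intro x hx
    simp only [Finset.mem_filter, Finset.mem_univ, true_and] at hx ⊢
    exact hx.2
  have h3 : Finset.range m ⊆ (Finset.range n).filter (fun i => c < lam.part i) := by
    intro i hi
    rw [Finset.mem_range] at hi
    have hin : i < n := lt_of_lt_of_le hi h1
    have hmem : i ∈ (Finset.range a).filter (fun j => c < lam.part j) := by
      apply mem_of_lt_card _ (lt_of_lt_of_le hi h2)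
      intro i j hij hj
      simp only [Finset.mem_filter, Finset.mem_range] at hj ⊢
      exact ⟨lt_of_le_of_lt hij hj.1, lt_of_lt_of_le hj.2 (lam.antitone i j hij)⟩
    simp only [Finset.mem_filter, Finset.mem_range] at hmem ⊢
    exact ⟨hin, hmem.2⟩
  calc m = (Finset.range m).card := (Finset.card_range m).symm
    _ ≤ _ := Finset.card_le_card h3

lemma dominates_of_inj {a : ℕ} {lam' lam : Shape a} (s : lam'.Tableau) (t : lam.Tableau)
    (hinj : ∀ x y, rowFn s x = rowFn s y → colFn t x = colFn t y → x = y) :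
    Dominates lam lam' := by
  intro n
  calc ∑ i ∈ Finset.range n, lam'.part i
      = (Finset.univ.filter (fun x => rowFn s x < n)).card := (card_row_lt s n).symm
    _ = ∑ c ∈ Finset.range a,
          (Finset.univ.filter (fun x => rowFn s x < n ∧ colFn t x = c)).card :=
        card_partition (colFn t) a (fun x _ => colFn_lt t x)
    _ ≤ ∑ c ∈ Finset.range a, ((Finset.range n).filter (fun i => c < lam.part i)).card :=
        Finset.sum_le_sum (fun c _ => card_bound s t hinj n c)
    _ = ∑ c ∈ Finset.range a,
          (Finset.univ.filter (fun x => rowFn t x < n ∧ colFn t x = c)).card :=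
        Finset.sum_congr rfl (fun c _ => (card_rowlt_col t n c).symm)
    _ = (Finset.univ.filter (fun x => rowFn t x < n)).card :=
        (card_partition (colFn t) a (fun x _ => colFn_lt t x)).symm
    _ = ∑ i ∈ Finset.range n, lam.part i := card_row_lt t n

lemma exists_good_swap {a : ℕ} {lam' lam : Shape a} (hdom : Dominates lam' lam)
    (hne : lam' ≠ lam) (s : lam'.Tableau) (t : lam.Tableau) :
    ∃ g : Equiv.Perm (Fin a), (∀ x, colFn t (g x) = colFn t x) ∧
      (∀ x, rowFn s (g x) = rowFn s x) ∧ g ≠ 1 ∧ g * g = 1 ∧ Equiv.Perm.sign g = -1 := by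
  have hni : ¬ (∀ x y, rowFn s x = rowFn s y → colFn t x = colFn t y → x = y) := by
    intro hinj
    exact hne (dominates_antisymm hdom (dominates_of_inj s t hinj))
  push_neg at hni
  obtain ⟨i, j, hrow, hcol, hij⟩ := hni
  refine ⟨Equiv.swap i j, ?_, ?_, ?_, Equiv.swap_mul_self i j, Equiv.Perm.sign_swap hij⟩
  · intro x
    rcases eq_or_ne x i with rfl | hxi
    · rw [Equiv.swap_apply_left]; exact hcol.symm
    rcases eq_or_ne x j with rfl | hxj
    · rw [Equiv.swap_apply_right]; exact hcol
    · rw [Equiv.swap_apply_of_ne_of_ne hxi hxj]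
  · intro x
    rcases eq_or_ne x i with rfl | hxi
    · rw [Equiv.swap_apply_left]; exact hrow.symm
    rcases eq_or_ne x j with rfl | hxj
    · rw [Equiv.swap_apply_right]; exact hrow
    · rw [Equiv.swap_apply_of_ne_of_ne hxi hxj]
  · intro h
    have hji : Equiv.swap i j i = (1 : Equiv.Perm (Fin a)) i := by rw [h]
    rw [Equiv.swap_apply_left, Equiv.Perm.one_apply] at hji
    exact hij hji.symm

end Combinatorics
section Algebra

lemma tabloid_mem {a : ℕ} {lam : Shape a} (s : lam.Tableau) :
    ((bigRep K a).asModuleEquiv.symm (tabloid K s)) ∈ permSubmodule K lam :=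
  Submodule.subset_span ⟨s, rfl⟩

/-- The image of the tabloid of `s` in the restricted-scalars permutation module. -/
def genElt {a : ℕ} {lam : Shape a} (s : lam.Tableau) :
    RestrictScalars K (MonoidAlgebra K (Equiv.Perm (Fin a))) (permSubmodule K lam) :=
  (RestrictScalars.addEquiv K _ _).symm
    ⟨(bigRep K a).asModuleEquiv.symm (tabloid K s), tabloid_mem K s⟩

lemma genElt_eq {a : ℕ} {lam : Shape a} {s s' : lam.Tableau} (h : rowFn s = rowFn s') :
    genElt K s = genElt K s' := by
  have htab : tabloid K s = tabloid K s' := by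
    unfold tabloid; rw [h]
  have h2 : (⟨(bigRep K a).asModuleEquiv.symm (tabloid K s), tabloid_mem K s⟩ :
        permSubmodule K lam)
      = ⟨(bigRep K a).asModuleEquiv.symm (tabloid K s'), tabloid_mem K s'⟩ :=
    Subtype.ext (show (bigRep K a).asModuleEquiv.symm (tabloid K s)
      = (bigRep K a).asModuleEquiv.symm (tabloid K s') from by rw [htab])
  unfold genElt
  rw [h2]

lemma bigRep_tabloid {a : ℕ} {lam : Shape a} (σ : Equiv.Perm (Fin a)) (s : lam.Tableau) :
    (bigRep K a) σ (tabloid K s) = tabloid K (σ.symm.trans s) := by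
  unfold bigRep tabloid
  show Finsupp.lmapDomain K K (σ • ·) (Finsupp.single (rowFn s) 1) = _
  rw [Finsupp.lmapDomain_apply, Finsupp.mapDomain_single]
  rfl

lemma permRep_genElt {a : ℕ} {lam : Shape a} (σ : Equiv.Perm (Fin a)) (s : lam.Tableau) :
    permRep K lam σ (genElt K s) = genElt K (σ.symm.trans s) := by
  have h1 : permRep K lam σ (genElt K s)
      = (RestrictScalars.addEquiv K _ _).symm
          ((MonoidAlgebra.single σ (1 : K)) • (RestrictScalars.addEquiv K _ _ (genElt K s))) := by
    simp only [permRep]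
    rw [← Representation.asAlgebraHom_single_one,
      Representation.ofModule_asAlgebraHom_apply_apply]
  rw [h1]
  unfold genElt
  rw [AddEquiv.apply_symm_apply]
  congr 1
  apply Subtype.ext
  show MonoidAlgebra.single σ (1 : K) •
      ((bigRep K a).asModuleEquiv.symm (tabloid K s)) = _
  show (bigRep K a).asAlgebraHom (MonoidAlgebra.single σ (1 : K))
      ((bigRep K a).asModuleEquiv.symm (tabloid K s)) = _
  rw [Representation.asAlgebraHom_single_one]
  exact bigRep_tabloid K σ s

/-- The set of tabloids of shape `lam`. -/
def tabSet (a : ℕ) (lam : Shape a) : Set ((bigRep K a).asModule) :=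
  {v | ∃ s : lam.Tableau, v = (bigRep K a).asModuleEquiv.symm (tabloid K s)}

lemma smul_mem_spanK {a : ℕ} {lam : Shape a} (r : MonoidAlgebra K (Equiv.Perm (Fin a)))
    (w : (bigRep K a).asModule) (hw : w ∈ Submodule.span K (tabSet K a lam)) :
    r • w ∈ Submodule.span K (tabSet K a lam) := by
  refine MonoidAlgebra.induction_on (motive := fun r => r • w ∈ Submodule.span K (tabSet K a lam)) r (fun g => ?_) (fun f g hf hg => ?_) (fun c f hf => ?_)
  · show (MonoidAlgebra.of K (Equiv.Perm (Fin a)) g) • w ∈ Submodule.span K (tabSet K a lam)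
    have heq : (MonoidAlgebra.of K (Equiv.Perm (Fin a)) g) • w = (bigRep K a) g w := by
      show (bigRep K a).asAlgebraHom _ w = _
      rw [MonoidAlgebra.of_apply,
        Representation.asAlgebraHom_single_one]
    rw [heq]
    have hmap : (bigRep K a) g w
        ∈ Submodule.map ((bigRep K a) g) (Submodule.span K (tabSet K a lam)) :=
      Submodule.mem_map_of_mem hw
    erw [Submodule.map_span] at hmap
    refine Submodule.span_le.2 ?_ hmap
    rintro v ⟨u, ⟨s, rfl⟩, rfl⟩
    apply Submodule.subset_span
    refine ⟨g.symm.trans s, ?_⟩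
    exact bigRep_tabloid K g s
  · show (f + g) • w ∈ Submodule.span K (tabSet K a lam)
    rw [add_smul]
    exact Submodule.add_mem _ hf hg
  · show (c • f) • w ∈ Submodule.span K (tabSet K a lam)
    have heq : (c • f) • w = c • (f • w) := by
      show (bigRep K a).asAlgebraHom (c • f) w = _
      rw [map_smul]
      erw [LinearMap.smul_apply]
      rfl
    rw [heq]
    exact Submodule.smul_mem _ _ hf

lemma mem_spanK_of_mem {a : ℕ} {lam : Shape a} (w : (bigRep K a).asModule)
    (hw : w ∈ permSubmodule K lam) : w ∈ Submodule.span K (tabSet K a lam) := by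
  refine Submodule.span_induction ?_ ?_ ?_ ?_ hw
  · intro v hv
    exact Submodule.subset_span hv
  · exact Submodule.zero_mem _
  · intro x y _ _ hx hy
    exact Submodule.add_mem _ hx hy
  · intro r x _ hx
    exact smul_mem_spanK K r x hx

/-- The underlying-vector map, as a `K`-linear map. -/
def underlying {a : ℕ} (lam : Shape a) :
    RestrictScalars K (MonoidAlgebra K (Equiv.Perm (Fin a))) (permSubmodule K lam)
      →ₗ[K] (bigRep K a).asModule where
  toFun x := ((RestrictScalars.addEquiv K _ _ x : permSubmodule K lam) : (bigRep K a).asModule)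
  map_add' x y := by simp
  map_smul' c x := by
    simp only [RingHom.id_apply]
    rw [RestrictScalars.addEquiv_map_smul]
    rw [Submodule.coe_smul]
    show (bigRep K a).asAlgebraHom (algebraMap K _ c) _ = _
    rw [AlgHom.commutes]
    rfl

lemma genElt_span {a : ℕ} (lam : Shape a)
    (x : RestrictScalars K (MonoidAlgebra K (Equiv.Perm (Fin a))) (permSubmodule K lam)) :
    x ∈ Submodule.span K {v | ∃ s : lam.Tableau, v = genElt K s} := by
  have hinj : Function.Injective (underlying K lam) := by
    intro x y h
    apply (RestrictScalars.addEquiv K _ _).injective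
    exact Subtype.ext h
  have h1 : underlying K lam x ∈ Submodule.span K (tabSet K a lam) :=
    mem_spanK_of_mem K _ (RestrictScalars.addEquiv K _ _ x).2
  have h2 : Submodule.span K (tabSet K a lam)
      ≤ Submodule.map (underlying K lam)
          (Submodule.span K {v | ∃ s : lam.Tableau, v = genElt K s}) := by
    rw [Submodule.map_span]
    apply Submodule.span_mono
    rintro v ⟨s, rfl⟩
    refine ⟨genElt K s, ⟨s, rfl⟩, ?_⟩
    simp only [underlying, genElt, LinearMap.coe_mk, AddHom.coe_mk, AddEquiv.apply_symm_apply]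
  obtain ⟨y, hy, hyx⟩ := Submodule.mem_map.1 (h2 h1)
  rwa [← hinj hyx]

end Algebra
/-- If `(λ',μ') ⊳ (λ,μ)` strictly, then the signed column sum
`k_{t_{λ,μ}}` annihilates the Young permutation module `M^{λ'} ⊗[K] M^{μ'}` of
`K[S_a × S_b]`. -/
theorem colSum_annihilates_outer_perm {a b : ℕ}
    (lam' lam : Shape a) (mu' mu : Shape b)
    (hdom₁ : Dominates lam' lam) (hdom₂ : Dominates mu' mu)
    (hne : ¬ (lam' = lam ∧ mu' = mu))
    (t : lam.Tableau) (t' : mu.Tableau)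
    (v : outerPermModule K lam' mu') :
    colSum K t t' • v = 0 := by
  classical
  have hsmul : ∀ w : outerPermModule K lam' mu',
      colSum K t t' • w
        = ∑ p : Equiv.Perm (Fin a) × Equiv.Perm (Fin b),
            (if (∀ x, colFn t (p.1 x) = colFn t x) ∧ (∀ y, colFn t' (p.2 y) = colFn t' y) then
              (((Equiv.Perm.sign p.1 * Equiv.Perm.sign p.2 : ℤˣ) : ℤ) : K) •
                ((outerRep (permRep K lam') (permRep K mu')) p w)
            else 0) := by
    intro w
    show (outerRep (permRep K lam') (permRep K mu')).asAlgebraHom (colSum K t t') w = _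
    rw [colSum, map_sum]
    erw [LinearMap.sum_apply]
    apply Finset.sum_congr rfl
    intro p _
    split_ifs with h
    · rw [map_smul]
      erw [LinearMap.smul_apply]
      congr 1
      rw [Representation.asAlgebraHom_single_one]
    · rw [map_zero]
      erw [LinearMap.zero_apply]
  set L := ∑ p : Equiv.Perm (Fin a) × Equiv.Perm (Fin b),
      (if (∀ x, colFn t (p.1 x) = colFn t x) ∧ (∀ y, colFn t' (p.2 y) = colFn t' y) then
        (((Equiv.Perm.sign p.1 * Equiv.Perm.sign p.2 : ℤˣ) : ℤ) : K) •
          ((outerRep (permRep K lam') (permRep K mu')) p)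
      else 0) with hLdef
  have happ : ∀ w : (RestrictScalars K (MonoidAlgebra K (Equiv.Perm (Fin a)))
        (permSubmodule K lam')) ⊗[K]
      (RestrictScalars K (MonoidAlgebra K (Equiv.Perm (Fin b))) (permSubmodule K mu')),
      L w = ∑ p : Equiv.Perm (Fin a) × Equiv.Perm (Fin b),
            (if (∀ x, colFn t (p.1 x) = colFn t x) ∧ (∀ y, colFn t' (p.2 y) = colFn t' y) then
              (((Equiv.Perm.sign p.1 * Equiv.Perm.sign p.2 : ℤˣ) : ℤ) : K) •
                ((outerRep (permRep K lam') (permRep K mu')) p w)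
            else 0) := by
    intro w
    rw [hLdef, LinearMap.sum_apply]
    apply Finset.sum_congr rfl
    intro p _
    split_ifs
    · rw [LinearMap.smul_apply]
    · rw [LinearMap.zero_apply]
  have hbase : ∀ (s : lam'.Tableau) (s' : mu'.Tableau),
      L (genElt K s ⊗ₜ[K] genElt K s') = 0 := by
    intro s s'
    rw [happ]
    have hT : ∀ p : Equiv.Perm (Fin a) × Equiv.Perm (Fin b),
        (outerRep (permRep K lam') (permRep K mu')) p (genElt K s ⊗ₜ[K] genElt K s')
          = (permRep K lam' p.1 (genElt K s)) ⊗ₜ[K] (permRep K mu' p.2 (genElt K s')) := by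
      intro p
      simp only [outerRep, Representation.tprod_apply, TensorProduct.map_tmul,
        MonoidHom.coe_comp, Function.comp_apply, MonoidHom.coe_fst, MonoidHom.coe_snd]
    rcases not_and_or.1 hne with hnl | hnm
    · obtain ⟨gp, hgcol, hgrow, hg1, hgsq, hgsgn⟩ := exists_good_swap hdom₁ hnl s t
      have hgg : ∀ x, gp (gp x) = x := by
        intro x
        have h := congrArg (fun e => e x) hgsq
        simpa [Equiv.Perm.mul_apply] using h
      have hsymm : gp.symm = gp := by
        have h : gp⁻¹ = gp := inv_eq_of_mul_eq_one_right hgsq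
        exact h
      have hfix : permRep K lam' gp (genElt K s) = genElt K s := by
        rw [permRep_genElt]
        apply genElt_eq
        funext x
        show rowFn s (gp.symm x) = rowFn s x
        rw [hsymm]
        exact hgrow x
      have hiff : ∀ σ : Equiv.Perm (Fin a),
          (∀ x, colFn t ((σ * gp) x) = colFn t x) ↔ (∀ x, colFn t (σ x) = colFn t x) := by
        intro σ
        constructor
        · intro h x
          have h1 := h (gp x)
          rw [Equiv.Perm.mul_apply, hgg x] at h1
          rw [h1, hgcol x]
        · intro h x
          rw [Equiv.Perm.mul_apply, h (gp x), hgcol x]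
      apply Finset.sum_involution (fun p _ => (p.1 * gp, p.2))
      · intro p _
        by_cases hc : (∀ x, colFn t (p.1 x) = colFn t x) ∧ (∀ y, colFn t' (p.2 y) = colFn t' y)
        · have hc' : (∀ x, colFn t (((p.1 * gp, p.2) : Equiv.Perm (Fin a) × Equiv.Perm (Fin b)).1 x)
              = colFn t x) ∧ (∀ y, colFn t' ((p.1 * gp, p.2).2 y) = colFn t' y) :=
            ⟨(hiff p.1).2 hc.1, hc.2⟩
          rw [if_pos hc, if_pos hc', hT, hT]
          have hA : permRep K lam' ((p.1 * gp, p.2) : Equiv.Perm (Fin a) × Equiv.Perm (Fin b)).1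
              (genElt K s) = permRep K lam' p.1 (genElt K s) := by
            show permRep K lam' (p.1 * gp) (genElt K s) = _
            rw [map_mul, Module.End.mul_apply, hfix]
          have hsgn' : ((((Equiv.Perm.sign ((p.1 * gp, p.2) :
                Equiv.Perm (Fin a) × Equiv.Perm (Fin b)).1)
                * Equiv.Perm.sign (p.1 * gp, p.2).2 : ℤˣ) : ℤ) : K)
              = -(((Equiv.Perm.sign p.1 * Equiv.Perm.sign p.2 : ℤˣ) : ℤ) : K) := by
            show ((((Equiv.Perm.sign (p.1 * gp)) * Equiv.Perm.sign p.2 : ℤˣ) : ℤ) : K) = _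
            rw [Equiv.Perm.sign_mul, hgsgn, mul_neg_one, neg_mul, Units.val_neg, Int.cast_neg]
          rw [hA, hsgn']
          have key : ∀ (c : K) (x : (RestrictScalars K (MonoidAlgebra K (Equiv.Perm (Fin a)))
              (permSubmodule K lam')) ⊗[K]
              (RestrictScalars K (MonoidAlgebra K (Equiv.Perm (Fin b))) (permSubmodule K mu'))),
              c • x + (-c) • x = 0 :=
            fun c x => by rw [← add_smul, add_neg_cancel, zero_smul]
          exact key _ _
        · have hc' : ¬ ((∀ x, colFn t (((p.1 * gp, p.2) :
              Equiv.Perm (Fin a) × Equiv.Perm (Fin b)).1 x) = colFn t x)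
              ∧ (∀ y, colFn t' ((p.1 * gp, p.2).2 y) = colFn t' y)) := by
            intro hcc
            exact hc ⟨(hiff p.1).1 hcc.1, hcc.2⟩
          rw [if_neg hc, if_neg hc', add_zero]
      · intro p _ _ heq
        apply hg1
        have h1 : p.1 * gp = p.1 := congrArg Prod.fst heq
        have h2 : p.1 * gp = p.1 * 1 := by rw [h1, mul_one]
        exact mul_left_cancel h2
      · intro p _
        exact Finset.mem_univ _
      · intro p _
        show ((p.1 * gp) * gp, p.2) = p
        rw [mul_assoc, hgsq, mul_one]
    · obtain ⟨gp, hgcol, hgrow, hg1, hgsq, hgsgn⟩ := exists_good_swap hdom₂ hnm s' t'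
      have hgg : ∀ x, gp (gp x) = x := by
        intro x
        have h := congrArg (fun e => e x) hgsq
        simpa [Equiv.Perm.mul_apply] using h
      have hsymm : gp.symm = gp := by
        have h : gp⁻¹ = gp := inv_eq_of_mul_eq_one_right hgsq
        exact h
      have hfix : permRep K mu' gp (genElt K s') = genElt K s' := by
        rw [permRep_genElt]
        apply genElt_eq
        funext x
        show rowFn s' (gp.symm x) = rowFn s' x
        rw [hsymm]
        exact hgrow x
      have hiff : ∀ σ : Equiv.Perm (Fin b),
          (∀ x, colFn t' ((σ * gp) x) = colFn t' x) ↔ (∀ x, colFn t' (σ x) = colFn t' x) := by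
        intro σ
        constructor
        · intro h x
          have h1 := h (gp x)
          rw [Equiv.Perm.mul_apply, hgg x] at h1
          rw [h1, hgcol x]
        · intro h x
          rw [Equiv.Perm.mul_apply, h (gp x), hgcol x]
      apply Finset.sum_involution (fun p _ => (p.1, p.2 * gp))
      · intro p _
        by_cases hc : (∀ x, colFn t (p.1 x) = colFn t x) ∧ (∀ y, colFn t' (p.2 y) = colFn t' y)
        · have hc' : (∀ x, colFn t (((p.1, p.2 * gp) :
              Equiv.Perm (Fin a) × Equiv.Perm (Fin b)).1 x) = colFn t x)
              ∧ (∀ y, colFn t' ((p.1, p.2 * gp).2 y) = colFn t' y) :=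
            ⟨hc.1, (hiff p.2).2 hc.2⟩
          rw [if_pos hc, if_pos hc', hT, hT]
          have hA : permRep K mu' ((p.1, p.2 * gp) :
              Equiv.Perm (Fin a) × Equiv.Perm (Fin b)).2
              (genElt K s') = permRep K mu' p.2 (genElt K s') := by
            show permRep K mu' (p.2 * gp) (genElt K s') = _
            rw [map_mul, Module.End.mul_apply, hfix]
          have hsgn' : ((((Equiv.Perm.sign ((p.1, p.2 * gp) :
                Equiv.Perm (Fin a) × Equiv.Perm (Fin b)).1)
                * Equiv.Perm.sign (p.1, p.2 * gp).2 : ℤˣ) : ℤ) : K)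
              = -(((Equiv.Perm.sign p.1 * Equiv.Perm.sign p.2 : ℤˣ) : ℤ) : K) := by
            show ((((Equiv.Perm.sign p.1) * Equiv.Perm.sign (p.2 * gp) : ℤˣ) : ℤ) : K) = _
            rw [Equiv.Perm.sign_mul, hgsgn, mul_neg_one, mul_neg, Units.val_neg, Int.cast_neg]
          rw [hA, hsgn']
          have key : ∀ (c : K) (x : (RestrictScalars K (MonoidAlgebra K (Equiv.Perm (Fin a)))
              (permSubmodule K lam')) ⊗[K]
              (RestrictScalars K (MonoidAlgebra K (Equiv.Perm (Fin b))) (permSubmodule K mu'))),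
              c • x + (-c) • x = 0 :=
            fun c x => by rw [← add_smul, add_neg_cancel, zero_smul]
          exact key _ _
        · have hc' : ¬ ((∀ x, colFn t (((p.1, p.2 * gp) :
              Equiv.Perm (Fin a) × Equiv.Perm (Fin b)).1 x) = colFn t x)
              ∧ (∀ y, colFn t' ((p.1, p.2 * gp).2 y) = colFn t' y)) := by
            intro hcc
            exact hc ⟨hcc.1, (hiff p.2).1 hcc.2⟩
          rw [if_neg hc, if_neg hc', add_zero]
      · intro p _ _ heq
        apply hg1
        have h1 : p.2 * gp = p.2 := congrArg Prod.snd heq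
        have h2 : p.2 * gp = p.2 * 1 := by rw [h1, mul_one]
        exact mul_left_cancel h2
      · intro p _
        exact Finset.mem_univ _
      · intro p _
        show (p.1, (p.2 * gp) * gp) = p
        rw [mul_assoc, hgsq, mul_one]
  have hall : ∀ w : (RestrictScalars K (MonoidAlgebra K (Equiv.Perm (Fin a)))
        (permSubmodule K lam')) ⊗[K]
      (RestrictScalars K (MonoidAlgebra K (Equiv.Perm (Fin b))) (permSubmodule K mu')),
      L w = 0 := by
    intro w
    induction w using TensorProduct.induction_on with
    | zero => exact map_zero L
    | tmul x y =>
        refine Submodule.span_induction (p := fun x _ => L (x ⊗ₜ[K] y) = 0)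
          ?_ ?_ ?_ ?_ (genElt_span K lam' x)
        · rintro x' ⟨s, rfl⟩
          refine Submodule.span_induction (p := fun y _ => L (genElt K s ⊗ₜ[K] y) = 0)
            ?_ ?_ ?_ ?_ (genElt_span K mu' y)
          · rintro y' ⟨s', rfl⟩
            exact hbase s s'
          · show L (genElt K s ⊗ₜ[K] 0) = 0
            rw [TensorProduct.tmul_zero]
            exact map_zero L
          · intro y1 y2 _ _ h1 h2
            rw [TensorProduct.tmul_add, map_add, h1, h2, add_zero]
          · intro c y1 _ h1
            rw [TensorProduct.tmul_smul, map_smul, h1, smul_zero]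
        · show L ((0 : RestrictScalars K (MonoidAlgebra K (Equiv.Perm (Fin a)))
              (permSubmodule K lam')) ⊗ₜ[K] y) = 0
          rw [TensorProduct.zero_tmul]
          exact map_zero L
        · intro x1 x2 _ _ h1 h2
          rw [TensorProduct.add_tmul, map_add, h1, h2, add_zero]
        · intro c x1 _ h1
          show L ((c • x1) ⊗ₜ[K] y) = 0
          rw [← TensorProduct.smul_tmul', map_smul, h1, smul_zero]
    | add x y hx hy =>
        rw [map_add, hx, hy, add_zero]
  rw [hsmul v, ← happ v]
  exact hall v
end
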